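/- Under the stated assumptions, for any measurable selection (ℓ̂, ĥ) of a minimizer over 𝔥_b² of (ℓ, h) ↦ ∫_{I₀} |b̂_{ℓ,h}(x) − b̂(x)| dx, one has ∫_{I₀} E(|b̂_{ℓ̂,ĥ}(x) − b(x)|) dx ≤ min_{(ℓ,h)∈𝔥_b²} { ∫_{I₀} E(|b̂_{ℓ,h}(x) − b(x)|) dx } + 2 (r₀ − l₀)^{1/2} R(b̂)^{1/2}. -/

import Mathlib

/-!
Triangle inequality through the pilot `b̂`: for every `(ℓ, h) ∈ 𝔥_b²`, in `L¹(I₀)`,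
`‖b̂_{ℓ̂,ĥ} - b‖ ≤ ‖b̂_{ℓ̂,ĥ} - b̂‖ + ‖b̂ - b‖ ≤ ‖b̂_{ℓ,h} - b̂‖ + ‖b̂ - b‖`
`≤ ‖b̂_{ℓ,h} - b‖ + 2 ‖b̂ - b‖`,
the middle step being the selection rule. Taking expectations, Cauchy–Schwarz on `I₀ × Ω` bounds
`E ‖b̂ - b‖` by `(r₀ - l₀)^{1/2} R(b̂)^{1/2}`. The integrability needed along the way holds because
the estimators are bounded and jointly measurable: their inner integrals are values of the tail
`t ↦ ∫_t^∞ K_η` of the kernel, which is antitone with values in `[0, 1]`.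
-/

open MeasureTheory

/-- The rescaled kernel `K_η(x) = η⁻¹ K(x/η)`. -/
noncomputable def Kh (K : ℝ → ℝ) (η x : ℝ) : ℝ := η⁻¹ * K (x / η)

/-- The estimator `𝔟̂_h⁻¹(w) = l₀ - 2ε + ∫_{I_{2ε}} ∫_{-∞}^{-w} K_h(-g(z) - y) dy dz`
of the inverse of `b`, computed from an estimation `g` of `b`. -/
noncomputable def binvEst (K : ℝ → ℝ) (l₀ r₀ ε h : ℝ) (g : ℝ → ℝ) (w : ℝ) : ℝ :=
  (l₀ - 2 * ε) +
    ∫ z in Set.Icc (l₀ - 2 * ε) (r₀ + 2 * ε), ∫ y in Set.Iic (-w), Kh K h (-(g z) - y)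

/-- The strictly decreasing estimator
`lo + ∫_{lo}^{hi} ∫_{-∞}^{-x} K_ℓ(-𝔟̂_h⁻¹(z) - y) dy dz`. -/
noncomputable def monoEst (K : ℝ → ℝ) (l₀ r₀ ε ℓ h lo hi : ℝ) (g : ℝ → ℝ) (x : ℝ) : ℝ :=
  lo + ∫ z in lo..hi, ∫ y in Set.Iic (-x), Kh K ℓ (-(binvEst K l₀ r₀ ε h g z) - y)

open Set

lemma measurable_apply_of_mem_finset {ι α β : Type*} [MeasurableSpace ι]
    [MeasurableSingletonClass ι] [MeasurableSpace α] [MeasurableSpace β] {F : ι → α → β}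
    {S : Finset ι} {σ : α → ι} (hσ : Measurable σ) (hσS : ∀ a, σ a ∈ S)
    (hF : ∀ i ∈ S, Measurable (F i)) : Measurable fun a => F (σ a) a := by
  have hsel : Measurable fun a => ((⟨σ a, hσS a⟩ : S), a) := (hσ.subtype_mk).prodMk measurable_id
  exact (measurable_from_prod_countable_right (f := fun p : S × α => F p.1 p.2)
    fun i => hF i i.2).comp hsel

lemma integral_abs_sub_le_add {α : Type*} [MeasurableSpace α] {μ : Measure α} {f g u : α → ℝ}
    (hfu : Integrable (fun a => f a - u a) μ) (hug : Integrable (fun a => u a - g a) μ) :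
    ∫ a, |f a - g a| ∂μ ≤ ∫ a, |f a - u a| ∂μ + ∫ a, |u a - g a| ∂μ := by
  rw [← integral_add hfu.abs hug.abs]
  exact integral_mono_of_nonneg (.of_forall fun _ => abs_nonneg _) (hfu.abs.add hug.abs)
    (.of_forall fun a => abs_sub_le (f a) (u a) (g a))

lemma integral_abs_le_sqrt_mul_sqrt {α : Type*} [MeasurableSpace α] {μ : Measure α}
    [IsFiniteMeasure μ] {f : α → ℝ} (hf : MemLp f 2 μ) :
    ∫ a, |f a| ∂μ ≤ √(μ.real univ) * √(∫ a, f a ^ 2 ∂μ) := by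
  have := integral_mul_le_Lp_mul_Lq_of_nonneg Real.HolderConjugate.two_two
    (f := fun _ => (1 : ℝ)) (g := fun a => |f a|) (.of_forall fun _ => zero_le_one)
    (.of_forall fun a => abs_nonneg (f a)) (memLp_const 1)
    (by rw [ENNReal.ofReal_ofNat]; exact hf.abs)
  simpa [Real.sqrt_eq_rpow] using this

section ProductSpace

variable {X Ω : Type*} [MeasurableSpace X] [MeasurableSpace Ω] {μ : Measure X} {P : Measure Ω}

theorem integral_integral_abs_sub_le_of_forall_integral_abs_sub_le [SFinite μ] [SFinite P]
    {f : X → ℝ} {g Fsel F : Ω → X → ℝ}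
    (hsel : Integrable (fun q : X × Ω => Fsel q.2 q.1 - f q.1) (μ.prod P))
    (hF : Integrable (fun q : X × Ω => F q.2 q.1 - f q.1) (μ.prod P))
    (hg : Integrable (fun q : X × Ω => g q.2 q.1 - f q.1) (μ.prod P))
    (hmin : ∀ ω, ∫ x, |Fsel ω x - g ω x| ∂μ ≤ ∫ x, |F ω x - g ω x| ∂μ) :
    ∫ x, ∫ ω, |Fsel ω x - f x| ∂P ∂μ ≤
      ∫ x, ∫ ω, |F ω x - f x| ∂P ∂μ + 2 * ∫ x, ∫ ω, |g ω x - f x| ∂P ∂μ := by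
  have hselg : Integrable (fun q : X × Ω => Fsel q.2 q.1 - g q.2 q.1) (μ.prod P) := by
    convert hsel.sub' hg using 2; ring
  have hFg : Integrable (fun q : X × Ω => F q.2 q.1 - g q.2 q.1) (μ.prod P) := by
    convert hF.sub' hg using 2; ring
  have hsel_le_F : ∫ q, |Fsel q.2 q.1 - g q.2 q.1| ∂μ.prod P ≤
      ∫ q, |F q.2 q.1 - g q.2 q.1| ∂μ.prod P := by
    rw [integral_prod_symm _ hselg.abs, integral_prod_symm _ hFg.abs]
    exact integral_mono_of_nonneg (.of_forall fun ω => integral_nonneg fun x => abs_nonneg _)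
      hFg.integral_norm_prod_right (.of_forall hmin)
  have hgf : ∫ q, |f q.1 - g q.2 q.1| ∂μ.prod P = ∫ q, |g q.2 q.1 - f q.1| ∂μ.prod P := by
    simp_rw [abs_sub_comm]
  rw [← integral_prod _ hsel.abs, ← integral_prod _ hF.abs, ← integral_prod _ hg.abs]
  calc ∫ q, |Fsel q.2 q.1 - f q.1| ∂μ.prod P
      ≤ ∫ q, |Fsel q.2 q.1 - g q.2 q.1| ∂μ.prod P + ∫ q, |g q.2 q.1 - f q.1| ∂μ.prod P :=
        integral_abs_sub_le_add hselg hg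
    _ ≤ ∫ q, |F q.2 q.1 - f q.1| ∂μ.prod P + ∫ q, |f q.1 - g q.2 q.1| ∂μ.prod P
          + ∫ q, |g q.2 q.1 - f q.1| ∂μ.prod P := by
        gcongr
        exact hsel_le_F.trans (integral_abs_sub_le_add hF (by simpa using hg.fun_neg))
    _ = _ := by rw [hgf]; ring

lemma memLp_two_prod_sub [SFinite μ] [SFinite P] {g : Ω → X → ℝ} {f : X → ℝ}
    (hg : Measurable (Function.uncurry g)) (hf : AEStronglyMeasurable f μ)
    (hsq : ∀ᵐ x ∂μ, Integrable (fun ω => (g ω x - f x) ^ 2) P)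
    (hR : Integrable (fun x => ∫ ω, (g ω x - f x) ^ 2 ∂P) μ) :
    MemLp (fun q : X × Ω => g q.2 q.1 - f q.1) 2 (μ.prod P) := by
  have hm : AEStronglyMeasurable (fun q : X × Ω => g q.2 q.1 - f q.1) (μ.prod P) :=
    (hg.comp measurable_swap).aestronglyMeasurable.sub hf.comp_fst
  refine (memLp_two_iff_integrable_sq hm).2 ((integrable_prod_iff (hm.pow 2)).2 ⟨hsq, ?_⟩)
  simpa only [Pi.pow_apply, Real.norm_eq_abs, abs_pow, sq_abs] using hR

lemma setIntegral_integral_abs_le_sqrt_mul_sqrt [IsProbabilityMeasure P] {s t : Set X}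
    [IsFiniteMeasure (μ.restrict s)] (hst : s ⊆ t) {E : X × Ω → ℝ}
    (hE : MemLp E 2 ((μ.restrict s).prod P))
    (ht : IntegrableOn (fun x => ∫ ω, E (x, ω) ^ 2 ∂P) t μ) :
    ∫ x in s, ∫ ω, |E (x, ω)| ∂P ∂μ ≤ √(μ.real s) * √(∫ x in t, ∫ ω, E (x, ω) ^ 2 ∂P ∂μ) := by
  rw [← integral_prod _ (hE.integrable one_le_two).abs]
  calc _ ≤ √(μ.real s) * √(∫ x in s, ∫ ω, E (x, ω) ^ 2 ∂P ∂μ) := by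
        simpa [← univ_prod_univ, measureReal_prod_prod, integral_prod _ hE.integrable_sq]
          using integral_abs_le_sqrt_mul_sqrt hE
    _ ≤ _ := by
        gcongr ?_ * √?_
        exact setIntegral_mono_set ht (.of_forall fun x => integral_nonneg fun ω => sq_nonneg _)
          hst.eventuallyLE

end ProductSpace

section Kernel

variable {K : ℝ → ℝ} {η : ℝ}

lemma Kh_nonneg (hK0 : ∀ y, 0 ≤ K y) (hη : 0 < η) (x : ℝ) : 0 ≤ Kh K η x :=
  mul_nonneg (inv_nonneg.mpr hη.le) (hK0 _)

lemma integrable_Kh (hKint : ∫ y, K y = 1) (hη : η ≠ 0) : Integrable (Kh K η) :=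
  ((Integrable.of_integral_ne_zero (by simp [hKint])).comp_div hη).const_mul η⁻¹

lemma integral_Kh (hKint : ∫ y, K y = 1) (hη : 0 < η) : ∫ x, Kh K η x = 1 := by
  simp only [Kh]
  rw [integral_const_mul, Measure.integral_comp_div K η, hKint, smul_eq_mul, abs_of_pos hη,
    mul_one, inv_mul_cancel₀ hη.ne']

noncomputable def tailKh (K : ℝ → ℝ) (η t : ℝ) : ℝ := ∫ u in Ici t, Kh K η u

lemma tailKh_nonneg (hK0 : ∀ y, 0 ≤ K y) (hη : 0 < η) (t : ℝ) : 0 ≤ tailKh K η t :=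
  setIntegral_nonneg measurableSet_Ici fun x _ => Kh_nonneg hK0 hη x

lemma tailKh_le_one (hK0 : ∀ y, 0 ≤ K y) (hKint : ∫ y, K y = 1) (hη : 0 < η) (t : ℝ) :
    tailKh K η t ≤ 1 :=
  integral_Kh hKint hη ▸
    setIntegral_le_integral (integrable_Kh hKint hη.ne') (.of_forall (Kh_nonneg hK0 hη))

lemma antitone_tailKh (hK0 : ∀ y, 0 ≤ K y) (hKint : ∫ y, K y = 1) (hη : 0 < η) :
    Antitone (tailKh K η) := fun _ _ hst =>
  setIntegral_mono_set (integrable_Kh hKint hη.ne').integrableOn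
    (.of_forall (Kh_nonneg hK0 hη)) (Ici_subset_Ici.mpr hst).eventuallyLE

lemma integral_Iic_Kh_eq_tailKh (K : ℝ → ℝ) (η c w : ℝ) :
    ∫ y in Iic (-w), Kh K η (-c - y) = tailKh K η (w - c) := by
  have hpre : (fun y => -c - y) ⁻¹' Ici (w - c) = Iic (-w) := by
    ext y; simp only [mem_preimage, mem_Ici, mem_Iic]; constructor <;> intro h <;> linarith
  rw [tailKh, ← hpre, (Measure.measurePreserving_sub_left volume (-c)).setIntegral_preimage_emb
    (Homeomorph.subLeft (-c)).measurableEmbedding]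

end Kernel

section Estimator

variable {K : ℝ → ℝ} {l₀ r₀ ε ℓ h lo hi : ℝ}

lemma binvEst_eq_tailKh (g : ℝ → ℝ) (w : ℝ) :
    binvEst K l₀ r₀ ε h g w =
      (l₀ - 2 * ε) + ∫ z in Icc (l₀ - 2 * ε) (r₀ + 2 * ε), tailKh K h (w - g z) := by
  simp only [binvEst, integral_Iic_Kh_eq_tailKh]

lemma monoEst_eq_tailKh (g : ℝ → ℝ) (x : ℝ) :
    monoEst K l₀ r₀ ε ℓ h lo hi g x =
      lo + ∫ z in lo..hi, tailKh K ℓ (x - binvEst K l₀ r₀ ε h g z) := by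
  simp only [monoEst, integral_Iic_Kh_eq_tailKh]

lemma abs_monoEst_le (hK0 : ∀ y, 0 ≤ K y) (hKint : ∫ y, K y = 1) (hℓ : 0 < ℓ)
    (g : ℝ → ℝ) (x : ℝ) : |monoEst K l₀ r₀ ε ℓ h lo hi g x| ≤ |lo| + |hi - lo| := by
  rw [monoEst_eq_tailKh]
  refine (abs_add_le _ _).trans (add_le_add_right ?_ _)
  have hbound := intervalIntegral.norm_integral_le_of_norm_le_const (a := lo) (b := hi) (C := 1)
    fun z _ => by
      rw [Real.norm_eq_abs, abs_le]
      exact ⟨by linarith [tailKh_nonneg hK0 hℓ (x - binvEst K l₀ r₀ ε h g z)],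
        tailKh_le_one hK0 hKint hℓ _⟩
  rwa [Real.norm_eq_abs, one_mul] at hbound

variable {α : Type*} [MeasurableSpace α] {G : α → ℝ → ℝ}

lemma measurable_binvEst (hK0 : ∀ y, 0 ≤ K y) (hKint : ∫ y, K y = 1) (hh : 0 < h)
    (hG : Measurable (Function.uncurry G)) :
    Measurable (Function.uncurry fun a w => binvEst K l₀ r₀ ε h (G a) w) := by
  simp only [Function.uncurry_def, binvEst_eq_tailKh]
  have hint : StronglyMeasurable fun q : (α × ℝ) × ℝ => tailKh K h (q.1.2 - G q.1.1 q.2) :=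
    ((antitone_tailKh hK0 hKint hh).measurable.comp ((measurable_snd.comp measurable_fst).sub
      (hG.comp ((measurable_fst.comp measurable_fst).prodMk measurable_snd)))).stronglyMeasurable
  exact measurable_const.add hint.integral_prod_right'.measurable

lemma measurable_monoEst (hK0 : ∀ y, 0 ≤ K y) (hKint : ∫ y, K y = 1) (hℓ : 0 < ℓ) (hh : 0 < h)
    (hG : Measurable (Function.uncurry G)) :
    Measurable (Function.uncurry fun a x => monoEst K l₀ r₀ ε ℓ h lo hi (G a) x) := by
  simp only [Function.uncurry_def, monoEst_eq_tailKh, intervalIntegral]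
  have hint : StronglyMeasurable fun p : (α × ℝ) × ℝ =>
      tailKh K ℓ (p.1.2 - binvEst K l₀ r₀ ε h (G p.1.1) p.2) :=
    ((antitone_tailKh hK0 hKint hℓ).measurable.comp ((measurable_snd.comp measurable_fst).sub
      ((measurable_binvEst hK0 hKint hh hG).comp
        ((measurable_fst.comp measurable_fst).prodMk measurable_snd)))).stronglyMeasurable
  exact measurable_const.add
    (hint.integral_prod_right'.measurable.sub hint.integral_prod_right'.measurable)

lemma integrable_monoEst_sub {Ω : Type*} [MeasurableSpace Ω] {μ : Measure ℝ} {P : Measure Ω}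
    [IsFiniteMeasure μ] [IsFiniteMeasure P] (hK0 : ∀ y, 0 ≤ K y) (hKint : ∫ y, K y = 1)
    {𝔥 : Finset ℝ} (h𝔥 : ∀ u ∈ 𝔥, 0 < u) {ℓ' h' : Ω → ℝ} (hℓ' : Measurable ℓ')
    (hh' : Measurable h') (hmem : ∀ ω, ℓ' ω ∈ 𝔥 ∧ h' ω ∈ 𝔥) {g : Ω → ℝ → ℝ}
    (hg : Measurable (Function.uncurry g)) {f : ℝ → ℝ} (hf : Integrable f μ) :
    Integrable (fun q : ℝ × Ω =>
      monoEst K l₀ r₀ ε (ℓ' q.2) (h' q.2) lo hi (g q.2) q.1 - f q.1) (μ.prod P) := by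
  have hG : Measurable (Function.uncurry fun (q : ℝ × Ω) => g q.2) :=
    hg.comp ((measurable_snd.comp measurable_fst).prodMk measurable_snd)
  have hmeas : Measurable fun q : ℝ × Ω =>
      monoEst K l₀ r₀ ε (ℓ' q.2) (h' q.2) lo hi (g q.2) q.1 := by
    refine measurable_apply_of_mem_finset
      (F := fun p q => monoEst K l₀ r₀ ε p.1 p.2 lo hi (g q.2) q.1) (S := 𝔥 ×ˢ 𝔥)
      ((hℓ'.comp measurable_snd).prodMk (hh'.comp measurable_snd))
      (fun q => Finset.mem_product.2 (hmem q.2)) fun p hp => ?_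
    obtain ⟨hp₁, hp₂⟩ := Finset.mem_product.1 hp
    exact (measurable_monoEst hK0 hKint (h𝔥 _ hp₁) (h𝔥 _ hp₂) hG).comp
      (measurable_id.prodMk measurable_fst)
  exact (Integrable.of_bound hmeas.aestronglyMeasurable (|lo| + |hi - lo|) (.of_forall fun q =>
    abs_monoEst_le hK0 hKint (h𝔥 _ (hmem q.2).1) _ _)).sub (hf.comp_fst P)

end Estimator

theorem stmt3_general (l₀ r₀ ε mb : ℝ) (K b b' : ℝ → ℝ)
    (hlr : l₀ < r₀) (hε : 0 < ε)
    -- kernel assumptions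
    (hK0 : ∀ y, 0 ≤ K y) (hKint : ∫ y, K y = 1)
    -- `b` is continuously differentiable on `I_{2ε}` with `b' ≤ -mb` there
    (hbd : ∀ x ∈ Set.Icc (l₀ - 2 * ε) (r₀ + 2 * ε), HasDerivAt b (b' x) x)
    -- the probability space and the estimator `b̂`
    (Ω : Type) [MeasurableSpace Ω] (P : Measure Ω) [IsProbabilityMeasure P]
    (bhat : Ω → ℝ → ℝ) (hbhat : Measurable (Function.uncurry bhat))
    (hsq : ∀ x ∈ Set.Icc (l₀ - 2 * ε) (r₀ + 2 * ε),
      Integrable (fun ω => |bhat ω x - b x| ^ 2) P)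
    (hRint : IntegrableOn (fun x => ∫ ω, |bhat ω x - b x| ^ 2 ∂P)
      (Set.Icc (l₀ - 2 * ε) (r₀ + 2 * ε)))
    -- the bandwidths set `𝔥_b`, a nonempty finite subset of `(0, min{1, m_b} ε)`
    (𝔥 : Finset ℝ) (h𝔥ne : 𝔥.Nonempty) (h𝔥 : ∀ u ∈ 𝔥, u ∈ Set.Ioo 0 (min 1 mb * ε))
    -- a measurable selection `(ℓ̂, ĥ)` of a minimizer of the bandwidths selection criterion
    (lhat hhat : Ω → ℝ)
    (hlmeas : Measurable lhat) (hhmeas : Measurable hhat)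
    (hmem : ∀ ω, lhat ω ∈ 𝔥 ∧ hhat ω ∈ 𝔥)
    (hargmin : ∀ ω, ∀ ℓ ∈ 𝔥, ∀ h ∈ 𝔥,
      (∫ x in Set.Icc l₀ r₀,
        |monoEst K l₀ r₀ ε (lhat ω) (hhat ω) (b (r₀ + ε)) (b (l₀ - ε)) (bhat ω) x
          - bhat ω x|) ≤
      ∫ x in Set.Icc l₀ r₀,
        |monoEst K l₀ r₀ ε ℓ h (b (r₀ + ε)) (b (l₀ - ε)) (bhat ω) x - bhat ω x|) :
    (∫ x in Set.Icc l₀ r₀, ∫ ω,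
        |monoEst K l₀ r₀ ε (lhat ω) (hhat ω) (b (r₀ + ε)) (b (l₀ - ε)) (bhat ω) x
          - b x| ∂P) ≤
      (𝔥 ×ˢ 𝔥).inf' (h𝔥ne.product h𝔥ne) (fun p =>
        ∫ x in Set.Icc l₀ r₀, ∫ ω,
          |monoEst K l₀ r₀ ε p.1 p.2 (b (r₀ + ε)) (b (l₀ - ε)) (bhat ω) x - b x| ∂P) +
      2 * Real.sqrt (r₀ - l₀) *
        Real.sqrt (∫ x in Set.Icc (l₀ - 2 * ε) (r₀ + 2 * ε),
          ∫ ω, |bhat ω x - b x| ^ 2 ∂P) := by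
  simp only [sq_abs] at hsq hRint ⊢
  have hsub : Icc l₀ r₀ ⊆ Icc (l₀ - 2 * ε) (r₀ + 2 * ε) :=
    Icc_subset_Icc (by linarith) (by linarith)
  have hb : IntegrableOn b (Icc l₀ r₀) := ContinuousOn.integrableOn_Icc fun x hx =>
    (hbd x (hsub hx)).continuousAt.continuousWithinAt
  have hL2 : MemLp (fun q : ℝ × Ω => bhat q.2 q.1 - b q.1) 2
      ((volume.restrict (Icc l₀ r₀)).prod P) :=
    memLp_two_prod_sub hbhat hb.aestronglyMeasurable
      (ae_restrict_of_forall_mem measurableSet_Icc fun x hx => hsq x (hsub hx))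
      (hRint.mono_set hsub)
  have hpilot := setIntegral_integral_abs_le_sqrt_mul_sqrt hsub hL2 hRint
  rw [Real.volume_real_Icc_of_le hlr.le] at hpilot
  have hpos : ∀ u ∈ 𝔥, 0 < u := fun u hu => (h𝔥 u hu).1
  obtain ⟨p₀, hp₀, hp₀_eq⟩ := Finset.exists_mem_eq_inf' (h𝔥ne.product h𝔥ne) fun p =>
    ∫ x in Icc l₀ r₀, ∫ ω, |monoEst K l₀ r₀ ε p.1 p.2 (b (r₀ + ε)) (b (l₀ - ε)) (bhat ω) x - b x| ∂P
  obtain ⟨hp₀₁, hp₀₂⟩ := Finset.mem_product.1 hp₀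
  have horacle := integral_integral_abs_sub_le_of_forall_integral_abs_sub_le
    (integrable_monoEst_sub hK0 hKint hpos hlmeas hhmeas hmem hbhat hb)
    (integrable_monoEst_sub hK0 hKint hpos measurable_const measurable_const
      (fun _ => ⟨hp₀₁, hp₀₂⟩) hbhat hb)
    (hL2.integrable one_le_two) fun ω => hargmin ω p₀.1 hp₀₁ p₀.2 hp₀₂
  rw [hp₀_eq]
  linarith

/-- Proposition 2.6: `L¹`-risk bound for the adaptive estimator `b̂_{ℓ̂,ĥ}`. -/
theorem stmt3 (l₀ r₀ ε mb : ℝ) (K b b' binv : ℝ → ℝ)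
    (hlr : l₀ < r₀) (hε : 0 < ε) (hε1 : ε ≤ 1) (hmb : 0 < mb)
    -- kernel assumptions
    (hK0 : ∀ y, 0 ≤ K y) (hK2 : ContDiff ℝ 2 K) (hKsymm : ∀ y, K (-y) = K y)
    (hKsupp : ∀ y, 1 < |y| → K y = 0) (hKint : ∫ y, K y = 1)
    -- `b` is continuously differentiable on `I_{2ε}` with `b' ≤ -mb` there
    (hbd : ∀ x ∈ Set.Icc (l₀ - 2 * ε) (r₀ + 2 * ε), HasDerivAt b (b' x) x)
    (hb'c : ContinuousOn b' (Set.Icc (l₀ - 2 * ε) (r₀ + 2 * ε)))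
    (hb'le : ∀ x ∈ Set.Icc (l₀ - 2 * ε) (r₀ + 2 * ε), b' x ≤ -mb)
    -- `binv` is the inverse of `b` on `I_{2ε}`
    (hbinv : ∀ x ∈ Set.Icc (l₀ - 2 * ε) (r₀ + 2 * ε), binv (b x) = x)
    -- the probability space and the estimator `b̂`
    (Ω : Type) [MeasurableSpace Ω] (P : Measure Ω) [IsProbabilityMeasure P]
    (bhat : Ω → ℝ → ℝ) (hbhat : Measurable (Function.uncurry bhat))
    (hsq : ∀ x ∈ Set.Icc (l₀ - 2 * ε) (r₀ + 2 * ε),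
      Integrable (fun ω => |bhat ω x - b x| ^ 2) P)
    (hRint : IntegrableOn (fun x => ∫ ω, |bhat ω x - b x| ^ 2 ∂P)
      (Set.Icc (l₀ - 2 * ε) (r₀ + 2 * ε)))
    -- the bandwidths set `𝔥_b`, a nonempty finite subset of `(0, min{1, m_b} ε)`
    (𝔥 : Finset ℝ) (h𝔥ne : 𝔥.Nonempty) (h𝔥 : ∀ u ∈ 𝔥, u ∈ Set.Ioo 0 (min 1 mb * ε))
    -- a measurable selection `(ℓ̂, ĥ)` of a minimizer of the bandwidths selection criterion
    (lhat hhat : Ω → ℝ)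
    (hlmeas : Measurable lhat) (hhmeas : Measurable hhat)
    (hmem : ∀ ω, lhat ω ∈ 𝔥 ∧ hhat ω ∈ 𝔥)
    (hargmin : ∀ ω, ∀ ℓ ∈ 𝔥, ∀ h ∈ 𝔥,
      (∫ x in Set.Icc l₀ r₀,
        |monoEst K l₀ r₀ ε (lhat ω) (hhat ω) (b (r₀ + ε)) (b (l₀ - ε)) (bhat ω) x
          - bhat ω x|) ≤
      ∫ x in Set.Icc l₀ r₀,
        |monoEst K l₀ r₀ ε ℓ h (b (r₀ + ε)) (b (l₀ - ε)) (bhat ω) x - bhat ω x|) :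
    (∫ x in Set.Icc l₀ r₀, ∫ ω,
        |monoEst K l₀ r₀ ε (lhat ω) (hhat ω) (b (r₀ + ε)) (b (l₀ - ε)) (bhat ω) x
          - b x| ∂P) ≤
      (𝔥 ×ˢ 𝔥).inf' (h𝔥ne.product h𝔥ne) (fun p =>
        ∫ x in Set.Icc l₀ r₀, ∫ ω,
          |monoEst K l₀ r₀ ε p.1 p.2 (b (r₀ + ε)) (b (l₀ - ε)) (bhat ω) x - b x| ∂P) +
      2 * Real.sqrt (r₀ - l₀) *
        Real.sqrt (∫ x in Set.Icc (l₀ - 2 * ε) (r₀ + 2 * ε),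
          ∫ ω, |bhat ω x - b x| ^ 2 ∂P) :=
  stmt3_general l₀ r₀ ε mb K b b' hlr hε hK0 hKint hbd Ω P bhat hbhat hsq hRint 𝔥 h𝔥ne h𝔥 lhat hhat
    hlmeas hhmeas hmem hargmin
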